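/- In the Price-k-Demand procedure's relation graph R_t, if agents have k-demand item-dependent valuations (v_i(b) ∈ {0, w(b)}), prices are p_t(B_i) = w(B_i) − ε^{r_i} with ε < min_{u∈I} w(u) and r_i the topological rank of B_i in the DAG obtained from R_t by removing all edges on directed cycles, then: whenever there is an edge ⟨s_i, s_j⟩ in the DAG (meaning v_i(B_j) = w(B_j)), agent i's utility for B_i strictly exceeds her utility for B_j. -/

import Mathlib

theorem stmt_14 (n : ℕ)
    (v : Fin n → Fin n → ℝ)
    (Wt : Fin n → ℝ)
    (hvii : ∀ i, v i i = Wt i)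
    (ε : ℝ) (hε0 : 0 < ε) (hε1 : ε < 1)
    (r : Fin n → ℕ)
    (p : Fin n → ℝ) (hp : ∀ j, p j = Wt j - ε ^ r j)
    (i j : Fin n) (hedge : v i j = Wt j) (hrank : r i < r j) :
    v i j - p j < v i i - p i := by
  rw [hedge, hvii, hp, hp, sub_sub_cancel, sub_sub_cancel]
  exact pow_lt_pow_right_of_lt_one₀ hε0 hε1 hrank
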